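/- arXiv:2105.02600 — 2 statements merged into one kernel-verified Lean document; each statement's English description precedes it below -/
import Mathlib

section
/- Let ι be a nonempty finite set, X : ι → ℝ, d ∈ ℝ, M' ∈ ℝ, and y : ι → ℝ with y(v) ∈ {0,1} for all v and ∑_{v ∈ ι} y(v) = 1. If for all v ∈ ι we have d ≤ X(v) and X(v) − M'·(1 − y(v)) − ∑_{v' ∈ ι, v' ≠ v} M'·y(v') ≤ d, then d = min_{v ∈ ι} X(v). (Reverse direction of the linearization in the proof of Proposition 1; it needs no bound on the X(v).) -/
/-- Reverse direction of the big-M linearization in the proof of Proposition 1: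
if `y` is a 0/1 vector summing to `1` and the linear constraints hold, then
`d` is the minimum of the finite nonempty family `X`.  No bound on the `X v` is needed. -/
theorem stmt1 {ι : Type*} [Fintype ι] [Nonempty ι] [DecidableEq ι]
    (X : ι → ℝ) (d M' : ℝ) (y : ι → ℝ)
    (hy01 : ∀ v, y v = 0 ∨ y v = 1) (hysum : ∑ v, y v = 1)
    (h : ∀ v, d ≤ X v ∧
      X v - M' * (1 - y v) - ∑ v' ∈ Finset.univ.erase v, M' * y v' ≤ d) :
    d = Finset.univ.inf' Finset.univ_nonempty X := by
  obtain ⟨v₀, hv₀⟩ : ∃ v, y v = 1 := by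
    by_contra hc
    push_neg at hc
    have : ∀ v ∈ Finset.univ, y v = 0 := fun v _ => (hy01 v).resolve_right (hc v)
    rw [Finset.sum_eq_zero this] at hysum
    norm_num at hysum
  have herase : ∑ v' ∈ Finset.univ.erase v₀, y v' = 0 := by
    have := Finset.add_sum_erase Finset.univ y (Finset.mem_univ v₀)
    rw [hysum] at this
    linarith [hv₀]
  have hX : X v₀ ≤ d := by
    have h2 := (h v₀).2
    rw [← Finset.mul_sum, herase, hv₀] at h2
    linarith
  refine le_antisymm (Finset.le_inf' _ _ fun v _ => (h v).1) ?_
  exact le_trans (Finset.inf'_le _ (Finset.mem_univ v₀)) hX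
end

section
/- (Theorem, part i, forward direction.) Let W be an OSDNP-feasible subset of V and let x_W : V → {0,1} be its indicator (x_W(v) = 1 iff v ∈ W). Then x_W is (P)-feasible, and moreover d_acc^{x_W}(u) = d_acc^W(u) for every u ∈ U. -/
/-- `d_acc^W u`: the minimal access time from urban area `u` to a stop of `W`
(for nonempty finite `W` the infimum below is the minimum). -/
noncomputable def daccW {V U : Type*} (d : U → V → ℝ) (W : Finset V) (u : U) : ℝ :=
  sInf (d u '' ↑W)

/-- `d_acc u = d_acc^V u`: the minimal access time over all bus stops. -/
noncomputable def daccV {V U : Type*} [Fintype V] (d : U → V → ℝ) (u : U) : ℝ :=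
  daccW d Finset.univ u

/-- `d_acc^x u = min_{v ∈ D_u^k} (d u v + (1 − x v) * M)`, the big-M penalized
access time of constraint (2) of program (P), where
`D_u^k = {v | d u v ≤ k u * d_acc u}` (nonempty since `acc u ∈ D_u^k`). -/
noncomputable def daccX {V U : Type*} [Fintype V] (d : U → V → ℝ) (k : U → ℝ)
    (M : ℝ) (x : V → ℝ) (u : U) : ℝ :=
  sInf ((fun v => d u v + (1 - x v) * M) '' {v | d u v ≤ k u * daccV d u})

/-- The 0/1 indicator vector `x_W` of a subset `W` of `V`. -/
def indW {V : Type*} [DecidableEq V] (W : Finset V) (v : V) : ℝ :=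
  if v ∈ W then 1 else 0

/-- A nonempty subset `W ⊆ V` is OSDNP-feasible if (A) the access times do not
increase by more than the factors `k u`, (B) no origin/destination delay increases
by more than the factor `α`, and (C) `|W| ≤ (1 − p_elim) * |V|`. -/
def OSDNPfeasible {V U : Type*} [Fintype V] (d : U → V → ℝ) (k : U → ℝ)
    (PC : V → V → ℝ) (acc : U → V) (α pelim : ℝ) (W : Finset V) : Prop :=
  W.Nonempty ∧
  (∀ u, daccW d W u ≤ k u * daccV d u) ∧
  (∀ u1 u2, daccW d W u1 + daccW d W u2 + PC (acc u1) (acc u2) ≤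
      α * (daccV d u1 + daccV d u2 + PC (acc u1) (acc u2))) ∧
  ((W.card : ℝ) ≤ (1 - pelim) * (Fintype.card V : ℝ))

/-- `x : V → {0,1}` is (P)-feasible if (1) every `u` has a retained stop in `D_u^k`,
(3) the delay constraints hold for `d_acc^x`, and (4) `∑_v x v ≤ (1 − p_elim) * |V|`. -/
def Pfeasible {V U : Type*} [Fintype V] [Fintype U] (d : U → V → ℝ) (k : U → ℝ)
    (PC : V → V → ℝ) (acc : U → V) (α pelim M : ℝ) (x : V → ℝ) : Prop :=
  (∀ u, ∃ v, d u v ≤ k u * daccV d u ∧ x v = 1) ∧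
  (∀ u1 u2, daccX d k M x u1 + daccX d k M x u2 + PC (acc u1) (acc u2) ≤
      α * (daccV d u1 + daccV d u2 + PC (acc u1) (acc u2))) ∧
  (∑ v, x v ≤ (1 - pelim) * (Fintype.card V : ℝ))

section

variable {V U : Type*} (d : U → V → ℝ)

theorem daccW_le {W : Finset V} {v : V} (hv : v ∈ W) (u : U) : daccW d W u ≤ d u v :=
  csInf_le ((W : Set V).toFinite.image _).bddBelow ⟨v, hv, rfl⟩

theorem exists_mem_daccW_eq {W : Finset V} (hW : W.Nonempty) (u : U) :
    ∃ w ∈ W, d u w = daccW d W u :=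
  ((Finset.coe_nonempty.mpr hW).image (d u)).csInf_mem ((W : Set V).toFinite.image _)

variable [Fintype V] [DecidableEq V]

theorem sum_indW (W : Finset V) : ∑ v, indW W v = W.card := by
  simp [indW]

/-- Stops outside `W` pay the penalty `M`, which already dominates the access time to `W`. -/
theorem isLeast_penalized_indW (k : U → ℝ) {M : ℝ} {W : Finset V} {u : U}
    (hd : ∀ v, 0 ≤ d u v) (hM : ∀ v, d u v ≤ M) (hW : W.Nonempty)
    (hA : daccW d W u ≤ k u * daccV d u) :
    IsLeast ((fun v => d u v + (1 - indW W v) * M) '' {v | d u v ≤ k u * daccV d u})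
      (daccW d W u) := by
  obtain ⟨w, hwW, hw⟩ := exists_mem_daccW_eq d hW u
  refine ⟨⟨w, show d u w ≤ _ from hw ▸ hA, by simp [indW, hwW, hw]⟩, ?_⟩
  rintro _ ⟨v, -, rfl⟩
  by_cases hv : v ∈ W
  · simpa [indW, hv] using daccW_le d hv u
  · calc daccW d W u = d u w := hw.symm
      _ ≤ d u v + M := by linarith [hM w, hd v]
      _ = d u v + (1 - indW W v) * M := by simp [indW, hv]

theorem daccX_indW (k : U → ℝ) {M : ℝ} {W : Finset V} {u : U}
    (hd : ∀ v, 0 ≤ d u v) (hM : ∀ v, d u v ≤ M) (hW : W.Nonempty)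
    (hA : daccW d W u ≤ k u * daccV d u) :
    daccX d k M (indW W) u = daccW d W u :=
  (isLeast_penalized_indW d k hd hM hW hA).csInf_eq

end

theorem stmt8_general {V U : Type*} [Fintype V] [Fintype U] [DecidableEq V]
    (d : U → V → ℝ) (hd : ∀ u v, 0 ≤ d u v)
    (k : U → ℝ)
    (PC : V → V → ℝ)
    (acc : U → V)
    (α : ℝ) (pelim : ℝ)
    (M : ℝ) (hM : ∀ u v, d u v ≤ M)
    (W : Finset V) (hW : OSDNPfeasible d k PC acc α pelim W) :
    Pfeasible d k PC acc α pelim M (indW W) ∧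
      ∀ u, daccX d k M (indW W) u = daccW d W u := by
  obtain ⟨hne, hA, hB, hC⟩ := hW
  have hdacc u : daccX d k M (indW W) u = daccW d W u :=
    daccX_indW d k (hd u) (hM u) hne (hA u)
  refine ⟨⟨fun u => ?_, fun u1 u2 => ?_, ?_⟩, hdacc⟩
  · obtain ⟨w, hwW, hw⟩ := exists_mem_daccW_eq d hne u
    exact ⟨w, hw ▸ hA u, if_pos hwW⟩
  · simpa only [hdacc] using hB u1 u2
  · simpa only [sum_indW] using hC

/-- Theorem, part i, forward direction: if `W` is OSDNP-feasible then its 0/1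
indicator `x_W` is (P)-feasible, and moreover `d_acc^{x_W} u = d_acc^W u` for all `u`. -/
theorem stmt8 {V U : Type*} [Fintype V] [Nonempty V] [Fintype U] [DecidableEq V]
    (d : U → V → ℝ) (hd : ∀ u v, 0 ≤ d u v)
    (k : U → ℝ) (hk : ∀ u, 1 ≤ k u)
    (PC : V → V → ℝ) (hPC : ∀ v1 v2, 0 ≤ PC v1 v2)
    (acc : U → V) (hacc : ∀ u, d u (acc u) = daccV d u)
    (α : ℝ) (hα : 1 ≤ α) (pelim : ℝ) (hp0 : 0 ≤ pelim) (hp1 : pelim ≤ 1)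
    (OD : U → U → ℕ)
    (M : ℝ) (hM : ∀ u v, d u v ≤ M)
    (W : Finset V) (hW : OSDNPfeasible d k PC acc α pelim W) :
    Pfeasible d k PC acc α pelim M (indW W) ∧
      ∀ u, daccX d k M (indW W) u = daccW d W u :=
  stmt8_general d hd k PC acc α pelim M hM W hW
end
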